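/- arXiv:2002.09169 — 2 statements merged into one kernel-verified Lean document; each statement's English description precedes it below -/
import Mathlib

section
/- Let π₀ = N(0, σ²I_d), p₀ ∈ (0,1), and δ with ‖δ‖₂ = r > 0. Then max over λ ≥ 0 of (λp₀ − ∫ (λπ₀(z) − π₀(z−δ))₊ dz) = Φ(Φ⁻¹(p₀) − r/σ), achieved at λ̂ = exp((2σrΦ⁻¹(p₀) − r²)/(2σ²)). -/
/-!
Write `π₁ = π₀ (· - δ)`. For every `λ` and every set `S`,
`λ π₀(S) - π₁(S) ≤ ∫ (λ π₀ - π₁)₊`, with equality when `S` is the Neyman–Pearson set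
`{π₁ ≤ λ π₀}`. The likelihood ratio `π₁ / π₀` is `exp ((2 ⟪z, δ⟫ - r²) / (2σ²))`, so for `λ̂` this
set is the half-space `{⟪z, δ⟫ ≤ σ r q}`. Rotating `δ` onto a coordinate axis and integrating out
the other coordinates, this half-space has `π₀`-mass `Φ(q) = p₀` and `π₁`-mass `Φ(q - r/σ)`.
Hence every `λ` gives at most `Φ(q - r/σ)`, and `λ̂` gives exactly that.
-/

open MeasureTheory Real Set

/-- CDF of the one-dimensional standard normal distribution. -/
noncomputable def stdNormalCDF (x : ℝ) : ℝ :=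
  ∫ t in Set.Iic x, (Real.sqrt (2 * π))⁻¹ * Real.exp (-t ^ 2 / 2)

open ProbabilityTheory
open scoped NNReal RealInnerProductSpace

theorem LinearIsometryEquiv.exists_apply_eq_of_norm_eq {F : Type*} [NormedAddCommGroup F]
    [InnerProductSpace ℝ F] {u v : F} (h : ‖u‖ = ‖v‖) : ∃ T : F ≃ₗᵢ[ℝ] F, T u = v :=
  ⟨Submodule.reflection (ℝ ∙ (u - v))ᗮ, Submodule.reflection_sub h⟩

theorem EuclideanSpace.integral_fintype_prod_eq_prod {ι : Type*} [Fintype ι] (f : ι → ℝ → ℝ) :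
    ∫ z : EuclideanSpace ℝ ι, ∏ i, f i (z i) = ∏ i, ∫ x, f i x := by
  rw [← ((EuclideanSpace.volume_preserving_symm_measurableEquiv_toLp ι).symm).integral_comp',
    ← integral_fintype_prod_volume_eq_prod]
  rfl

section NeymanPearson

variable {α : Type*} [MeasurableSpace α] {μ : Measure α} {f g : α → ℝ}

theorem mul_setIntegral_sub_setIntegral_le_integral_max (hf : Integrable f μ)
    (hg : Integrable g μ) (lam : ℝ) (S : Set α) :
    lam * ∫ x in S, f x ∂μ - ∫ x in S, g x ∂μ ≤ ∫ x, max (lam * f x - g x) 0 ∂μ := by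
  have hh : Integrable (fun x => lam * f x - g x) μ := (hf.const_mul lam).sub hg
  rw [← integral_const_mul, ← integral_sub (hf.const_mul lam).integrableOn hg.integrableOn]
  calc ∫ x in S, (lam * f x - g x) ∂μ ≤ ∫ x in S, max (lam * f x - g x) 0 ∂μ :=
        integral_mono hh.integrableOn hh.pos_part.integrableOn fun x => le_max_left _ _
    _ ≤ ∫ x, max (lam * f x - g x) 0 ∂μ :=
        setIntegral_le_integral hh.pos_part (ae_of_all _ fun x => le_max_right _ _)

theorem integral_max_sub_eq_mul_setIntegral_sub_setIntegral {lam : ℝ} (hf : Integrable f μ)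
    (hg : Integrable g μ) {S : Set α} (hS : MeasurableSet S) (hin : ∀ x ∈ S, g x ≤ lam * f x)
    (hout : ∀ x ∉ S, lam * f x ≤ g x) :
    ∫ x, max (lam * f x - g x) 0 ∂μ = lam * ∫ x in S, f x ∂μ - ∫ x in S, g x ∂μ := by
  have hpos : (fun x => max (lam * f x - g x) 0) = S.indicator fun x => lam * f x - g x := by
    ext x
    by_cases hx : x ∈ S
    · rw [indicator_of_mem hx, max_eq_left (sub_nonneg.2 (hin x hx))]
    · rw [indicator_of_notMem hx, max_eq_right (sub_nonpos.2 (hout x hx))]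
  rw [hpos, integral_indicator hS, integral_sub (hf.const_mul lam).integrableOn hg.integrableOn,
    integral_const_mul]

theorem isGreatest_mul_setIntegral_sub_integral_max {lam : ℝ} (hf : Integrable f μ)
    (hg : Integrable g μ) {S : Set α} (hS : MeasurableSet S) (hlam : 0 ≤ lam)
    (hin : ∀ x ∈ S, g x ≤ lam * f x) (hout : ∀ x ∉ S, lam * f x ≤ g x) :
    IsGreatest {v | ∃ lam' : ℝ, 0 ≤ lam' ∧
        v = lam' * ∫ x in S, f x ∂μ - ∫ x, max (lam' * f x - g x) 0 ∂μ}
      (∫ x in S, g x ∂μ) := by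
  refine ⟨⟨lam, hlam, ?_⟩, ?_⟩
  · rw [integral_max_sub_eq_mul_setIntegral_sub_setIntegral hf hg hS hin hout]
    ring
  · rintro _ ⟨lam', -, rfl⟩
    linarith [mul_setIntegral_sub_setIntegral_le_integral_max hf hg lam' S]

end NeymanPearson

theorem gaussianReal_real_apply_eq_integral (μ : ℝ) {v : ℝ≥0} (hv : v ≠ 0) (s : Set ℝ) :
    (gaussianReal μ v).real s = ∫ x in s, gaussianPDFReal μ v x := by
  rw [measureReal_def, gaussianReal_apply_eq_integral _ hv,
    ENNReal.toReal_ofReal (integral_nonneg fun _ => gaussianPDFReal_nonneg _ _ _)]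

theorem setIntegral_Iic_gaussianPDFReal {σ : ℝ} (hσ : 0 < σ) (a : ℝ) :
    ∫ x in Iic a, gaussianPDFReal 0 (.mk (σ ^ 2) (sq_nonneg σ)) x = stdNormalCDF (a / σ) := by
  have hv : NNReal.mk (σ ^ 2) (sq_nonneg σ) ≠ 0 := by
    simpa [← NNReal.coe_ne_zero] using hσ.ne'
  have hmap : (gaussianReal 0 1).map (σ * ·) = gaussianReal 0 (.mk (σ ^ 2) (sq_nonneg σ)) := by
    rw [gaussianReal_map_const_mul, mul_zero, mul_one]
  rw [← gaussianReal_real_apply_eq_integral _ hv, ← hmap,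
    map_measureReal_apply (by fun_prop) measurableSet_Iic, preimage_const_mul_Iic₀ _ hσ, gaussianReal_real_apply_eq_integral _ one_ne_zero]
  simp [stdNormalCDF, gaussianPDFReal]

section IsotropicGaussian

variable {ι : Type*} [Fintype ι]

noncomputable def isotropicGaussianPDF (σ : ℝ) (z : EuclideanSpace ℝ ι) : ℝ :=
  (2 * π * σ ^ 2) ^ (-(Fintype.card ι : ℝ) / 2) * exp (-‖z‖ ^ 2 / (2 * σ ^ 2))

theorem isotropicGaussianPDF_eq_prod (σ : ℝ) (z : EuclideanSpace ℝ ι) :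
    isotropicGaussianPDF σ z = ∏ i, gaussianPDFReal 0 (.mk (σ ^ 2) (sq_nonneg σ)) (z i) := by
  have hc : (2 * π * σ ^ 2) ^ (-(Fintype.card ι : ℝ) / 2)
      = (√(2 * π * σ ^ 2))⁻¹ ^ Fintype.card ι := by
    rw [sqrt_eq_rpow, ← rpow_neg (by positivity), ← rpow_mul_natCast (by positivity)]
    ring_nf
  simp only [isotropicGaussianPDF, gaussianPDFReal, Finset.prod_mul_distrib, Finset.prod_const,
    Finset.card_univ, ← exp_sum, EuclideanSpace.real_norm_sq_eq, hc, NNReal.coe_mk, sub_zero,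
    ← Finset.sum_div, Finset.sum_neg_distrib]

theorem isotropicGaussianPDF_pos {σ : ℝ} (hσ : σ ≠ 0) (z : EuclideanSpace ℝ ι) :
    0 < isotropicGaussianPDF σ z := by
  unfold isotropicGaussianPDF
  have : 0 < 2 * π * σ ^ 2 := by positivity
  positivity

theorem isotropicGaussianPDF_map (σ : ℝ) (T : EuclideanSpace ℝ ι ≃ₗᵢ[ℝ] EuclideanSpace ℝ ι)
    (z : EuclideanSpace ℝ ι) : isotropicGaussianPDF σ (T z) = isotropicGaussianPDF σ z := by
  simp only [isotropicGaussianPDF, T.norm_map]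

theorem isotropicGaussianPDF_sub (σ : ℝ) (z δ : EuclideanSpace ℝ ι) :
    isotropicGaussianPDF σ (z - δ)
      = isotropicGaussianPDF σ z * exp ((2 * ⟪z, δ⟫ - ‖δ‖ ^ 2) / (2 * σ ^ 2)) := by
  simp only [isotropicGaussianPDF, mul_assoc, ← exp_add]
  rw [norm_sub_sq_real]
  ring_nf

theorem isotropicGaussianPDF_sub_le_exp_mul_iff {σ : ℝ} (hσ : σ ≠ 0) (z δ : EuclideanSpace ℝ ι)
    (c : ℝ) :
    isotropicGaussianPDF σ (z - δ)
        ≤ exp ((2 * c - ‖δ‖ ^ 2) / (2 * σ ^ 2)) * isotropicGaussianPDF σ z ↔ ⟪z, δ⟫ ≤ c := by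
  rw [isotropicGaussianPDF_sub, mul_comm (exp _),
    mul_le_mul_iff_right₀ (isotropicGaussianPDF_pos hσ z), exp_le_exp,
    div_le_div_iff_of_pos_right (by positivity)]
  constructor <;> intro h <;> linarith

theorem integrable_isotropicGaussianPDF (σ : ℝ) :
    Integrable (isotropicGaussianPDF (ι := ι) σ) := by
  rw [← ((EuclideanSpace.volume_preserving_symm_measurableEquiv_toLp ι).symm).integrable_comp_emb
    (MeasurableEquiv.measurableEmbedding _)]
  simp only [Function.comp_def, isotropicGaussianPDF_eq_prod]
  exact Integrable.fintype_prod fun _ => integrable_gaussianPDFReal _ _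

theorem setIntegral_apply_mem_isotropicGaussianPDF {σ : ℝ} (hσ : σ ≠ 0) (i₀ : ι) {s : Set ℝ}
    (hs : MeasurableSet s) :
    ∫ z in {z | z i₀ ∈ s}, isotropicGaussianPDF σ z
      = ∫ x in s, gaussianPDFReal 0 (.mk (σ ^ 2) (sq_nonneg σ)) x := by
  classical
  set g := gaussianPDFReal 0 (.mk (σ ^ 2) (sq_nonneg σ))
  have hv : NNReal.mk (σ ^ 2) (sq_nonneg σ) ≠ 0 := by
    simpa [← NNReal.coe_ne_zero] using hσ
  have hS : MeasurableSet {z : EuclideanSpace ℝ ι | z i₀ ∈ s} :=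
    (by fun_prop : Measurable fun z : EuclideanSpace ℝ ι => z i₀) hs
  let F : ι → ℝ → ℝ := fun i => if i = i₀ then s.indicator g else g
  have hF : {z : EuclideanSpace ℝ ι | z i₀ ∈ s}.indicator (isotropicGaussianPDF σ)
      = fun z => ∏ i, F i (z i) := by
    ext z
    by_cases hz : z i₀ ∈ s
    · rw [indicator_of_mem (show z ∈ {z | z i₀ ∈ s} from hz), isotropicGaussianPDF_eq_prod]
      exact Finset.prod_congr rfl fun i _ => by by_cases hi : i = i₀ <;> simp [F, g, hi, hz]
    · rw [indicator_of_notMem (show z ∉ {z | z i₀ ∈ s} from hz),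
        Finset.prod_eq_zero (Finset.mem_univ i₀) (by simp [F, hz])]
  rw [← integral_indicator hS, hF,
    EuclideanSpace.integral_fintype_prod_eq_prod, Finset.prod_eq_single i₀
      (fun i _ hi => by simp [F, hi, g, integral_gaussianPDFReal_eq_one _ hv]) (by simp)]
  simp only [F, if_pos rfl]
  exact integral_indicator hs

theorem setIntegral_inner_le_isotropicGaussianPDF {σ : ℝ} (hσ : 0 < σ) {δ : EuclideanSpace ℝ ι}
    (hδ : δ ≠ 0) (c : ℝ) :
    ∫ z in {z | ⟪z, δ⟫ ≤ c}, isotropicGaussianPDF σ z = stdNormalCDF (c / (σ * ‖δ‖)) := by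
  classical
  obtain ⟨i₀⟩ : Nonempty ι := by
    by_contra h
    rw [not_nonempty_iff] at h
    exact hδ (Subsingleton.elim _ _)
  set r := ‖δ‖
  have hr : 0 < r := norm_pos_iff.mpr hδ
  obtain ⟨T, hT⟩ := LinearIsometryEquiv.exists_apply_eq_of_norm_eq
    (u := r • EuclideanSpace.single i₀ (1 : ℝ)) (v := δ) (by simp [norm_smul, r])
  have hpre : T ⁻¹' {z | ⟪z, δ⟫ ≤ c} = {w | w i₀ ∈ Iic (c / r)} := by
    ext w
    rw [← hT]
    simp [T.inner_map_map, real_inner_smul_right, le_div_iff₀ hr, mul_comm,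
      EuclideanSpace.inner_single_right]
  rw [← T.measurePreserving.setIntegral_preimage_emb T.toHomeomorph.measurableEmbedding, hpre]
  simp only [isotropicGaussianPDF_map]
  rw [setIntegral_apply_mem_isotropicGaussianPDF hσ.ne' i₀ measurableSet_Iic,
    setIntegral_Iic_gaussianPDFReal hσ, div_div, mul_comm r]

theorem setIntegral_inner_le_isotropicGaussianPDF_sub {σ : ℝ} (hσ : 0 < σ)
    {δ : EuclideanSpace ℝ ι} (hδ : δ ≠ 0) (m : EuclideanSpace ℝ ι) (c : ℝ) :
    ∫ z in {z | ⟪z, δ⟫ ≤ c}, isotropicGaussianPDF σ (z - m)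
      = stdNormalCDF ((c - ⟪m, δ⟫) / (σ * ‖δ‖)) := by
  have hpre : (· - m) ⁻¹' {w | ⟪w, δ⟫ ≤ c - ⟪m, δ⟫} = {z | ⟪z, δ⟫ ≤ c} := by
    ext z
    simp [inner_sub_left]
  rw [← hpre, (measurePreserving_sub_right volume m).setIntegral_preimage_emb
    (measurableEmbedding_subRight m), setIntegral_inner_le_isotropicGaussianPDF hσ hδ]

end IsotropicGaussian

theorem stmt_9_general {d : ℕ} (σ r : ℝ) (hσ : 0 < σ) (hr : 0 < r)
    (π₀ : EuclideanSpace ℝ (Fin d) → ℝ)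
    (hπ₀ : π₀ = fun z => (2 * π * σ ^ 2) ^ (-(d:ℝ) / 2) * Real.exp (-‖z‖ ^ 2 / (2 * σ ^ 2)))
    (δ : EuclideanSpace ℝ (Fin d)) (hδ : ‖δ‖ = r)
    (p₀ q : ℝ) (hq : stdNormalCDF q = p₀) :
    IsGreatest
      {v : ℝ | ∃ lam : ℝ, 0 ≤ lam ∧
        v = lam * p₀ - ∫ z, max (lam * π₀ z - π₀ (z - δ)) 0}
      (stdNormalCDF (q - r / σ)) ∧
    (Real.exp ((2 * σ * r * q - r ^ 2) / (2 * σ ^ 2)) * p₀ -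
        ∫ z, max (Real.exp ((2 * σ * r * q - r ^ 2) / (2 * σ ^ 2)) * π₀ z - π₀ (z - δ)) 0)
      = stdNormalCDF (q - r / σ) := by
  obtain rfl : π₀ = isotropicGaussianPDF σ := by
    rw [hπ₀]
    ext z
    simp [isotropicGaussianPDF]
  have hδ₀ : δ ≠ 0 := by
    rintro rfl
    exact hr.ne (by simpa using hδ)
  set S := {z : EuclideanSpace ℝ (Fin d) | ⟪z, δ⟫ ≤ σ * r * q}
  have hS₀ : ∫ z in S, isotropicGaussianPDF σ z = p₀ := by
    rw [setIntegral_inner_le_isotropicGaussianPDF hσ hδ₀, hδ,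
      mul_div_cancel_left₀ q (by positivity), hq]
  have hS₁ : ∫ z in S, isotropicGaussianPDF σ (z - δ) = stdNormalCDF (q - r / σ) := by
    rw [setIntegral_inner_le_isotropicGaussianPDF_sub hσ hδ₀, real_inner_self_eq_norm_sq, hδ]
    congr 1
    field_simp
  have hratio (z) := isotropicGaussianPDF_sub_le_exp_mul_iff hσ.ne' z δ (σ * r * q)
  simp only [hδ, ← mul_assoc] at hratio
  have hf := integrable_isotropicGaussianPDF (ι := Fin d) σ
  have hg := hf.comp_sub_right δ
  have hSm : MeasurableSet S := measurableSet_le (by fun_prop) measurable_const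
  have hin (z) (hz : z ∈ S) := (hratio z).2 hz
  have hout (z) (hz : z ∉ S) := (not_le.1 (mt (hratio z).1 hz)).le
  rw [← hS₀, ← hS₁]
  refine ⟨isGreatest_mul_setIntegral_sub_integral_max hf hg hSm (exp_pos _).le hin hout, ?_⟩
  rw [integral_max_sub_eq_mul_setIntegral_sub_setIntegral hf hg hSm hin hout]
  ring

theorem stmt_9 {d : ℕ} (σ r : ℝ) (hσ : 0 < σ) (hr : 0 < r)
    (π₀ : EuclideanSpace ℝ (Fin d) → ℝ)
    (hπ₀ : π₀ = fun z => (2 * π * σ ^ 2) ^ (-(d:ℝ) / 2) * Real.exp (-‖z‖ ^ 2 / (2 * σ ^ 2)))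
    (δ : EuclideanSpace ℝ (Fin d)) (hδ : ‖δ‖ = r)
    (p₀ q : ℝ) (hp₀ : p₀ ∈ Ioo (0:ℝ) 1) (hq : stdNormalCDF q = p₀) :
    IsGreatest
      {v : ℝ | ∃ lam : ℝ, 0 ≤ lam ∧
        v = lam * p₀ - ∫ z, max (lam * π₀ z - π₀ (z - δ)) 0}
      (stdNormalCDF (q - r / σ)) ∧
    (Real.exp ((2 * σ * r * q - r ^ 2) / (2 * σ ^ 2)) * p₀ -
        ∫ z, max (Real.exp ((2 * σ * r * q - r ^ 2) / (2 * σ ^ 2)) * π₀ z - π₀ (z - δ)) 0)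
      = stdNormalCDF (q - r / σ) :=
  stmt_9_general σ r hσ hr π₀ hπ₀ δ hδ p₀ q hq
end

section
/- With the spherically symmetric density π₀(z) ∝ ‖z‖₂^{−k} exp(−‖z‖₂²/(2σ²)) (0 ≤ k < d, σ > 0) and the ℓ₂ ball B = {δ : ‖δ‖₂ ≤ r}, the maximum of D(δ) = ∫ (λπ₀(z) − π₀(z−δ))₊ dz over δ ∈ B is attained at δ* = (r, 0, …, 0), for every λ > 0. -/
/-!
Since `max (a - b) 0 = a - min a b`, `D δ = λ ∫ π₀ - ∫ min (λ π₀ z) (π₀ (z - δ)) dz`, so it suffices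
that this overlap integral decreases as `‖δ‖` grows. The reflection of `ℝᵈ` exchanging `δ` and
`(‖δ‖, 0, …, 0)` preserves both radial factors, so the overlap depends only on `‖δ‖`. Along the
first axis, Fubini reduces it to integrals `∫ min (p x) (q (x - c)) dx` with `p`, `q` even and
nonincreasing in `|x|`. By the layer-cake formula this is `∫ t, |{p > t} ∩ ({q > t} + c)| dt`, and
the superlevel sets are centred intervals (up to null sets), whose overlap decreases in `c ≥ 0`.
-/

open MeasureTheory Set

noncomputable def radialProfile (C k σ s : ℝ) : ℝ :=
  C * Real.sqrt s ^ (-k) * Real.exp (-s / (2 * σ ^ 2))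

section RadialProfile

variable {C k σ : ℝ}

lemma radialProfile_nonneg (hC : 0 ≤ C) (s : ℝ) : 0 ≤ radialProfile C k σ s := by
  unfold radialProfile
  have := Real.rpow_nonneg (Real.sqrt_nonneg s) (-k)
  positivity

lemma measurable_radialProfile : Measurable (radialProfile C k σ) := by
  unfold radialProfile
  fun_prop

-- Only on `Ioi 0`: at `s = 0` the factor `√s ^ (-k)` is the junk value `0 ^ (-k) = 0`.
lemma radialProfile_antitoneOn (hC : 0 ≤ C) (hk : 0 ≤ k) :
    AntitoneOn (radialProfile C k σ) (Ioi 0) := by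
  intro s hs s' _ hss'
  have hpow : Real.sqrt s' ^ (-k) ≤ Real.sqrt s ^ (-k) :=
    Real.rpow_le_rpow_of_nonpos (Real.sqrt_pos.2 hs) (Real.sqrt_le_sqrt hss') (neg_nonpos.2 hk)
  have hexp : Real.exp (-s' / (2 * σ ^ 2)) ≤ Real.exp (-s / (2 * σ ^ 2)) :=
    Real.exp_le_exp.2 (div_le_div_of_nonneg_right (neg_le_neg hss') (by positivity))
  unfold radialProfile
  gcongr

end RadialProfile

lemma ae_eq_univ_or_Ioo_of_neg_mem {A : Set ℝ} (hneg : ∀ x ∈ A, -x ∈ A)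
    (hdown : ∀ x y, 0 < x → x ≤ y → y ∈ A → x ∈ A) :
    A =ᵐ[volume] univ ∨ ∃ L, A =ᵐ[volume] Ioo (-L) L := by
  have habs : ∀ x, x ∈ A ↔ |x| ∈ A := by
    intro x
    rcases abs_choice x with h | h <;> rw [h]
    exact ⟨hneg x, fun hx => by simpa using hneg _ hx⟩
  have hnull (s : Set ℝ) : s \ ({0} : Set ℝ) =ᵐ[volume] s :=
    sdiff_null_ae_eq_self (measure_singleton 0)
  set S := A ∩ Ioi 0
  by_cases hbdd : BddAbove S
  · right
    set L := sSup S
    have hle : ∀ x ∈ A, |x| ≤ L := by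
      intro x hx
      rcases eq_or_ne x 0 with rfl | hx0
      · simpa using Real.sSup_nonneg fun y (hy : y ∈ S) => hy.2.le
      · exact le_csSup hbdd ⟨(habs x).1 hx, abs_pos.2 hx0⟩
    have hsub : Ioo (-L) L \ {0} ⊆ A := by
      rintro x ⟨hxL, hx0⟩
      obtain ⟨y, ⟨hyA, -⟩, hy⟩ : ∃ y ∈ S, |x| < y := by
        by_contra! h
        exact (Real.sSup_le h (abs_nonneg x)).not_gt (abs_lt.2 hxL)
      exact (habs x).2 (hdown _ _ (abs_pos.2 hx0) hy.le hyA)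
    have hsup : A ⊆ Icc (-L) L := fun x hx => abs_le.1 (hle x hx)
    exact ⟨L, (hsup.eventuallyLE.trans Ioo_ae_eq_Icc.symm.le).antisymm
      ((hnull _).symm.le.trans hsub.eventuallyLE)⟩
  · left
    have hsub : univ \ {0} ⊆ A := by
      rintro x ⟨-, hx0⟩
      obtain ⟨y, ⟨hyA, -⟩, hy⟩ := not_bddAbove_iff.1 hbdd |x|
      exact (habs x).2 (hdown _ _ (abs_pos.2 hx0) hy.le hyA)
    exact (subset_univ A).eventuallyLE.antisymm ((hnull _).symm.le.trans hsub.eventuallyLE)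

lemma volume_Ioo_inter_Ioo_add_antitoneOn (L M : ℝ) :
    AntitoneOn (fun c => volume (Ioo (-L) L ∩ Ioo (-M + c) (M + c))) (Ici 0) := by
  intro c hc c' _ hcc'
  simp only [Ioo_inter_Ioo, Real.volume_Ioo]
  refine ENNReal.ofReal_le_ofReal ?_
  rcases min_cases L (M + c) with ⟨e1, f1⟩ | ⟨e1, f1⟩ <;>
  rcases min_cases L (M + c') with ⟨e2, f2⟩ | ⟨e2, f2⟩ <;>
  rcases max_cases (-L) (-M + c) with ⟨e3, f3⟩ | ⟨e3, f3⟩ <;>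
  rcases max_cases (-L) (-M + c') with ⟨e4, f4⟩ | ⟨e4, f4⟩ <;>
  simp only [e1, e2, e3, e4] <;> linarith [mem_Ici.1 hc]

lemma volume_inter_preimage_sub_antitoneOn {A B : Set ℝ}
    (hA : A =ᵐ[volume] univ ∨ ∃ L, A =ᵐ[volume] Ioo (-L) L)
    (hB : B =ᵐ[volume] univ ∨ ∃ M, B =ᵐ[volume] Ioo (-M) M) :
    AntitoneOn (fun c => volume (A ∩ (· - c) ⁻¹' B)) (Ici 0) := by
  have hcongr {A' B' : Set ℝ} (hA' : A =ᵐ[volume] A') (hB' : B =ᵐ[volume] B') (c : ℝ) :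
      volume (A ∩ (· - c) ⁻¹' B) = volume (A' ∩ (· - c) ⁻¹' B') :=
    measure_congr (hA'.inter
      ((measurePreserving_sub_right volume c).quasiMeasurePreserving.preimage_ae_eq hB'))
  rcases hA with hA | ⟨L, hA⟩ <;> rcases hB with hB | ⟨M, hB⟩ <;>
    simp only [hcongr hA hB, preimage_univ, inter_univ, univ_inter, preimage_sub_const_Ioo]
  · exact antitoneOn_const
  · simpa [Real.volume_Ioo] using antitoneOn_const
  · exact antitoneOn_const
  · exact volume_Ioo_inter_Ioo_add_antitoneOn L M

lemma setOf_lt_ae_eq_univ_or_Ioo {p : ℝ → ℝ} (hp : p.Even) (hpa : AntitoneOn p (Ioi 0)) (t : ℝ) :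
    {x | t < p x} =ᵐ[volume] univ ∨ ∃ L, {x | t < p x} =ᵐ[volume] Ioo (-L) L :=
  ae_eq_univ_or_Ioo_of_neg_mem (fun x hx => by simpa [hp x] using hx)
    fun x y hx hxy hy => hy.trans_le (hpa hx (hx.trans_le hxy) hxy)

lemma lintegral_min_comp_sub_antitoneOn {p q : ℝ → ℝ} (hpm : Measurable p) (hqm : Measurable q)
    (hp0 : 0 ≤ p) (hq0 : 0 ≤ q) (hp : p.Even) (hq : q.Even)
    (hpa : AntitoneOn p (Ioi 0)) (hqa : AntitoneOn q (Ioi 0)) :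
    AntitoneOn (fun c => ∫⁻ x, ENNReal.ofReal (min (p x) (q (x - c)))) (Ici 0) := by
  have hlayer (c : ℝ) : ∫⁻ x, ENNReal.ofReal (min (p x) (q (x - c)))
      = ∫⁻ t in Ioi 0, volume ({x | t < p x} ∩ (· - c) ⁻¹' {y | t < q y}) := by
    rw [lintegral_eq_lintegral_meas_lt (f := fun x => min (p x) (q (x - c))) volume
      (Filter.Eventually.of_forall fun x => le_min (hp0 x) (hq0 (x - c))) (by fun_prop)]
    simp only [lt_min_iff]
    rfl
  intro c hc c' hc' hcc'
  simp only [hlayer]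
  exact lintegral_mono fun t => volume_inter_preimage_sub_antitoneOn
    (setOf_lt_ae_eq_univ_or_Ioo hp hpa t) (setOf_lt_ae_eq_univ_or_Ioo hq hqa t) hc hc' hcc'

lemma EuclideanSpace.sum_sq_eq_norm_sq {ι : Type*} [Fintype ι] (x : EuclideanSpace ℝ ι) :
    ∑ i, x i ^ 2 = ‖x‖ ^ 2 := by
  simp [EuclideanSpace.norm_sq_eq]

lemma lintegral_sum_sq_sub_eq_of_sum_sq_eq {d : ℕ} (H : ℝ × ℝ → ENNReal) {δ ε : Fin d → ℝ}
    (h : ∑ i, δ i ^ 2 = ∑ i, ε i ^ 2) :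
    ∫⁻ z, H (∑ i, z i ^ 2, ∑ i, (z - δ) i ^ 2) = ∫⁻ z, H (∑ i, z i ^ 2, ∑ i, (z - ε) i ^ 2) := by
  set v := WithLp.toLp 2 δ
  set w := WithLp.toLp 2 ε
  have hvw : ‖w‖ = ‖v‖ := by
    rw [← sq_eq_sq₀ (norm_nonneg _) (norm_nonneg _), ← EuclideanSpace.sum_sq_eq_norm_sq,
      ← EuclideanSpace.sum_sq_eq_norm_sq]
    exact h.symm
  set Q := Submodule.reflection (ℝ ∙ (w - v))ᗮ
  have hQ : Q w = v := Submodule.reflection_sub hvw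
  have hpt (y : EuclideanSpace ℝ (Fin d)) :
      (∑ i, (Q y) i ^ 2, ∑ i, (WithLp.ofLp (Q y) - δ) i ^ 2)
        = (∑ i, y i ^ 2, ∑ i, (WithLp.ofLp y - ε) i ^ 2) := by
    change (∑ i, (Q y) i ^ 2, ∑ i, (Q y - v) i ^ 2) = (∑ i, y i ^ 2, ∑ i, (y - w) i ^ 2)
    simp only [EuclideanSpace.sum_sq_eq_norm_sq, ← hQ, ← map_sub, LinearIsometryEquiv.norm_map]
  have hofLp := EuclideanSpace.volume_preserving_symm_measurableEquiv_toLp (Fin d)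
  calc ∫⁻ z, H (∑ i, z i ^ 2, ∑ i, (z - δ) i ^ 2)
      = ∫⁻ y : EuclideanSpace ℝ (Fin d), H (∑ i, y i ^ 2, ∑ i, (WithLp.ofLp y - δ) i ^ 2) :=
        (hofLp.lintegral_comp_emb (MeasurableEquiv.toLp 2 _).symm.measurableEmbedding _).symm
    _ = ∫⁻ y : EuclideanSpace ℝ (Fin d),
          H (∑ i, (Q y) i ^ 2, ∑ i, (WithLp.ofLp (Q y) - δ) i ^ 2) :=
        (Q.measurePreserving.lintegral_comp_emb Q.toHomeomorph.measurableEmbedding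
          (fun y => H (∑ i, y i ^ 2, ∑ i, (WithLp.ofLp y - δ) i ^ 2))).symm
    _ = ∫⁻ y : EuclideanSpace ℝ (Fin d), H (∑ i, y i ^ 2, ∑ i, (WithLp.ofLp y - ε) i ^ 2) := by
        simp only [hpt]
    _ = ∫⁻ z, H (∑ i, z i ^ 2, ∑ i, (z - ε) i ^ 2) :=
        hofLp.lintegral_comp_emb (MeasurableEquiv.toLp 2 _).symm.measurableEmbedding
          (fun z => H (∑ i, z i ^ 2, ∑ i, (z - ε) i ^ 2))

lemma lintegral_sum_sq_sub_single_eq {m : ℕ} {H : ℝ × ℝ → ENNReal} (hH : Measurable H) (c : ℝ) :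
    ∫⁻ z : Fin (m + 1) → ℝ, H (∑ i, z i ^ 2, ∑ i, (z - Pi.single 0 c : Fin (m + 1) → ℝ) i ^ 2)
      = ∫⁻ w : Fin m → ℝ, ∫⁻ x, H (x ^ 2 + ∑ j, w j ^ 2, (x - c) ^ 2 + ∑ j, w j ^ 2) := by
  have he := (volume_preserving_piFinSuccAbove (fun _ : Fin (m + 1) => ℝ) 0).symm
  rw [← he.lintegral_comp_emb (MeasurableEquiv.measurableEmbedding _),
    Measure.volume_eq_prod, lintegral_prod_symm _ (by fun_prop)]
  refine lintegral_congr fun w => lintegral_congr fun x => ?_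
  simp [Fin.sum_univ_succ]

lemma AntitoneOn.comp_sq_add {g : ℝ → ℝ} (hg : AntitoneOn g (Ioi 0)) {b : ℝ} (hb : 0 ≤ b) :
    AntitoneOn (fun x => g (x ^ 2 + b)) (Ioi 0) := fun x hx _ hy hxy =>
  hg (add_pos_of_pos_of_nonneg (pow_pos hx 2) hb) (add_pos_of_pos_of_nonneg (pow_pos hy 2) hb)
    (by gcongr; exact hx.le)

lemma sum_sq_pi_single {ι : Type*} [Fintype ι] [DecidableEq ι] (j : ι) (a : ℝ) :
    ∑ i, (Pi.single j a : ι → ℝ) i ^ 2 = a ^ 2 := by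
  simp [Pi.single_apply]

lemma lintegral_min_radial_le_of_sum_sq_le {m : ℕ} {g₁ g₂ : ℝ → ℝ}
    (hg₁ : Measurable g₁) (hg₂ : Measurable g₂) (hg₁0 : 0 ≤ g₁) (hg₂0 : 0 ≤ g₂)
    (hg₁a : AntitoneOn g₁ (Ioi 0)) (hg₂a : AntitoneOn g₂ (Ioi 0)) {δ ε : Fin (m + 1) → ℝ}
    (h : ∑ i, δ i ^ 2 ≤ ∑ i, ε i ^ 2) :
    ∫⁻ z, ENNReal.ofReal (min (g₁ (∑ i, z i ^ 2)) (g₂ (∑ i, (z - ε) i ^ 2)))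
      ≤ ∫⁻ z, ENNReal.ofReal (min (g₁ (∑ i, z i ^ 2)) (g₂ (∑ i, (z - δ) i ^ 2))) := by
  set H : ℝ × ℝ → ENNReal := fun s => ENNReal.ofReal (min (g₁ s.1) (g₂ s.2))
  have hH : Measurable H := by fun_prop
  have hsingle (η : Fin (m + 1) → ℝ) :
      ∑ i, η i ^ 2 = ∑ i, (Pi.single 0 √(∑ i, η i ^ 2) : Fin (m + 1) → ℝ) i ^ 2 := by
    rw [sum_sq_pi_single, Real.sq_sqrt (Finset.sum_nonneg fun i _ => sq_nonneg (η i))]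
  show ∫⁻ z, H (∑ i, z i ^ 2, ∑ i, (z - ε) i ^ 2) ≤ ∫⁻ z, H (∑ i, z i ^ 2, ∑ i, (z - δ) i ^ 2)
  rw [lintegral_sum_sq_sub_eq_of_sum_sq_eq H (hsingle δ),
    lintegral_sum_sq_sub_eq_of_sum_sq_eq H (hsingle ε),
    lintegral_sum_sq_sub_single_eq hH, lintegral_sum_sq_sub_single_eq hH]
  refine lintegral_mono fun w => ?_
  set b := ∑ j, w j ^ 2
  have hb : 0 ≤ b := Finset.sum_nonneg fun j _ => sq_nonneg (w j)
  exact lintegral_min_comp_sub_antitoneOn (p := fun x => g₁ (x ^ 2 + b))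
    (q := fun x => g₂ (x ^ 2 + b)) (by fun_prop) (by fun_prop)
    (fun x => hg₁0 (x ^ 2 + b)) (fun x => hg₂0 (x ^ 2 + b)) (fun x => by simp) (fun x => by simp)
    (hg₁a.comp_sq_add hb) (hg₂a.comp_sq_add hb)
    (Real.sqrt_nonneg _) (Real.sqrt_nonneg _) (Real.sqrt_le_sqrt h)

lemma integral_max_sub_zero_eq {α : Type*} [MeasurableSpace α] {μ : Measure α} {f g : α → ℝ}
    (hf : Integrable f μ) (hg : Integrable g μ) :
    ∫ x, max (f x - g x) 0 ∂μ = ∫ x, f x ∂μ - ∫ x, min (f x) (g x) ∂μ := by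
  have hpt (x : α) : max (f x - g x) 0 = f x - min (f x) (g x) := by
    rcases le_total (f x) (g x) with h | h <;> simp [h]
  simp_rw [hpt]
  exact integral_sub hf (hf.inf hg)

lemma integral_max_sub_radial_le_of_sum_sq_le {m : ℕ} {g : ℝ → ℝ} (hg : Measurable g)
    (hg0 : 0 ≤ g) (hga : AntitoneOn g (Ioi 0))
    (hint : Integrable fun z : Fin (m + 1) → ℝ => g (∑ i, z i ^ 2)) {lam : ℝ} (hlam : 0 ≤ lam)
    {δ ε : Fin (m + 1) → ℝ} (h : ∑ i, δ i ^ 2 ≤ ∑ i, ε i ^ 2) :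
    ∫ z, max (lam * g (∑ i, z i ^ 2) - g (∑ i, (z - δ) i ^ 2)) 0
      ≤ ∫ z, max (lam * g (∑ i, z i ^ 2) - g (∑ i, (z - ε) i ^ 2)) 0 := by
  set f : (Fin (m + 1) → ℝ) → ℝ := fun z => g (∑ i, z i ^ 2)
  have hmin (η : Fin (m + 1) → ℝ) : Integrable fun z => min (lam * f z) (f (z - η)) :=
    (hint.const_mul lam).inf (hint.comp_sub_right η)
  have hmin0 (η : Fin (m + 1) → ℝ) : 0 ≤ᵐ[volume] fun z => min (lam * f z) (f (z - η)) :=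
    Filter.Eventually.of_forall fun z => le_min (mul_nonneg hlam (hg0 _)) (hg0 _)
  rw [integral_max_sub_zero_eq (hint.const_mul lam) (hint.comp_sub_right δ),
    integral_max_sub_zero_eq (hint.const_mul lam) (hint.comp_sub_right ε)]
  refine sub_le_sub_left ?_ _
  rw [integral_eq_lintegral_of_nonneg_ae (hmin0 ε) (hmin ε).aestronglyMeasurable,
    integral_eq_lintegral_of_nonneg_ae (hmin0 δ) (hmin δ).aestronglyMeasurable]
  exact ENNReal.toReal_mono (hmin δ).lintegral_lt_top.ne
    (lintegral_min_radial_le_of_sum_sq_le (g₁ := fun s => lam * g s) (by fun_prop) hg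
      (fun s => mul_nonneg hlam (hg0 s)) hg0
      (fun _ hs _ ht hst => mul_le_mul_of_nonneg_left (hga hs ht hst) hlam) hga h)

theorem stmt_16_general {d : ℕ} (hd : 0 < d) (k σ r : ℝ) (hk : 0 ≤ k) (hr : 0 < r)
    (C : ℝ) (hC : 0 < C)
    (π₀ : (Fin d → ℝ) → ℝ)
    (hπ₀ : π₀ = fun z =>
      C * Real.sqrt (∑ i, z i ^ 2) ^ (-k) *
        Real.exp (-(∑ i, z i ^ 2) / (2 * σ ^ 2)))
    (hint : Integrable π₀)
    (lam : ℝ) (hlam : 0 < lam)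
    (D : (Fin d → ℝ) → ℝ)
    (hD : D = fun δ => ∫ z, max (lam * π₀ z - π₀ (z - δ)) 0) :
    IsGreatest (D '' {δ | Real.sqrt (∑ i, δ i ^ 2) ≤ r})
      (D fun i : Fin d => if (i : ℕ) = 0 then r else 0) := by
  obtain ⟨m, rfl⟩ := Nat.exists_eq_add_one_of_ne_zero hd.ne'
  have hstar : (fun i : Fin (m + 1) => if (i : ℕ) = 0 then r else 0) = Pi.single 0 r := by
    funext i
    simp [Pi.single_apply, Fin.val_eq_zero_iff]
  change π₀ = fun z => radialProfile C k σ (∑ i, z i ^ 2) at hπ₀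
  subst hπ₀ hD
  rw [hstar]
  refine ⟨⟨_, ?_, rfl⟩, ?_⟩
  · simp [sum_sq_pi_single, hr.le]
  · rintro _ ⟨δ, hδ, rfl⟩
    have hδr : ∑ i, δ i ^ 2 ≤ ∑ i, (Pi.single 0 r : Fin (m + 1) → ℝ) i ^ 2 := by
      rw [sum_sq_pi_single, ← Real.sqrt_le_left hr.le]
      exact hδ
    exact integral_max_sub_radial_le_of_sum_sq_le measurable_radialProfile
      (radialProfile_nonneg hC.le) (radialProfile_antitoneOn hC.le hk) hint hlam.le hδr

/-- With the spherically symmetric density `π₀(z) ∝ ‖z‖₂^{-k} exp(-‖z‖₂²/(2σ²))`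
and the `ℓ₂` ball of radius `r`, the discrepancy `D(δ) = ∫ (λπ₀(z) - π₀(z-δ))₊ dz`
is maximized over the ball at `δ* = (r, 0, …, 0)`. -/
theorem stmt_16 {d : ℕ} (hd : 0 < d) (k σ r : ℝ) (hk : 0 ≤ k) (hkd : k < d)
    (hσ : 0 < σ) (hr : 0 < r)
    (C : ℝ) (hC : 0 < C)
    (π₀ : (Fin d → ℝ) → ℝ)
    (hπ₀ : π₀ = fun z =>
      C * Real.sqrt (∑ i, z i ^ 2) ^ (-k) *
        Real.exp (-(∑ i, z i ^ 2) / (2 * σ ^ 2)))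
    (hint : Integrable π₀) (hprob : ∫ z, π₀ z = 1)
    (lam : ℝ) (hlam : 0 < lam)
    (D : (Fin d → ℝ) → ℝ)
    (hD : D = fun δ => ∫ z, max (lam * π₀ z - π₀ (z - δ)) 0) :
    IsGreatest (D '' {δ | Real.sqrt (∑ i, δ i ^ 2) ≤ r})
      (D fun i : Fin d => if (i : ℕ) = 0 then r else 0) :=
  stmt_16_general hd k σ r hk hr C hC π₀ hπ₀ hint lam hlam D hD
end
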